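/- Suppose f_d is a Routh force with Routh potential β. Then for all q0, q1 ∈ E: (1) D₁f⁺(q0,q1)(u0)(u1) = D₂f⁻(q0,q1)(u1)(u0) for all u0, u1 ∈ E, where D₁f⁺(q0,q1)(u0) denotes the derivative at q0 in direction u0 of x ↦ f⁺(x,q1) and D₂f⁻(q0,q1)(u1) the derivative at q1 in direction u1 of y ↦ f⁻(q0,y); (2) the Routh potential is determined by the force: for every q, u, v ∈ E and every choice of the opposite argument, β(q)(u,v) = D₁f⁻(q,q1)(u)(v) − D₁f⁻(q,q1)(v)(u) for all q1 ∈ E, and β(q)(u,v) = −D₂f⁺(q0,q)(u)(v) + D₂f⁺(q0,q)(v)(u) for all q0 ∈ E. -/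

import Mathlib

open ContinuousLinearMap

variable {E : Type*} [NormedAddCommGroup E] [NormedSpace ℝ E] [FiniteDimensional ℝ E]

/-- Partial Fréchet derivative in the first variable. -/
noncomputable def D1 (L : E × E → ℝ) (x : E × E) : E →L[ℝ] ℝ :=
  fderiv ℝ (fun a => L (a, x.2)) x.1

/-- Partial Fréchet derivative in the second variable. -/
noncomputable def D2 (L : E × E → ℝ) (x : E × E) : E →L[ℝ] ℝ :=
  fderiv ℝ (fun b => L (x.1, b)) x.2

/-- The force 1-form `f_d` on `E × E`. -/
noncomputable def fd (fm fp : E × E → (E →L[ℝ] ℝ)) (x : E × E) : (E × E) →L[ℝ] ℝ :=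
  (fm x).comp (ContinuousLinearMap.fst ℝ E E) + (fp x).comp (ContinuousLinearMap.snd ℝ E E)

/-- The 1-form `θ⁺` on `E × E`. -/
noncomputable def thetaP (Ld : E × E → ℝ) (fp : E × E → (E →L[ℝ] ℝ)) (x : E × E) :
    (E × E) →L[ℝ] ℝ := (D2 Ld x + fp x).comp (ContinuousLinearMap.snd ℝ E E)

/-- The 1-form `θ⁻` on `E × E`. -/
noncomputable def thetaM (Ld : E × E → ℝ) (fm : E × E → (E →L[ℝ] ℝ)) (x : E × E) :
    (E × E) →L[ℝ] ℝ := -((D1 Ld x + fm x).comp (ContinuousLinearMap.fst ℝ E E))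

/-- The exterior derivative of a 1-form `α` on `E × E`, as a function of two vectors. -/
noncomputable def extd (α : E × E → ((E × E) →L[ℝ] ℝ)) (x : E × E) (U V : E × E) : ℝ :=
  fderiv ℝ α x U V - fderiv ℝ α x V U

/-- The 2-form `ω⁺ := -dθ⁺` on `E × E`. -/
noncomputable def omegaP (Ld : E × E → ℝ) (fp : E × E → (E →L[ℝ] ℝ)) (x : E × E)
    (U V : E × E) : ℝ := -extd (thetaP Ld fp) x U V

/-- The 2-form `ω⁻ := -dθ⁻` on `E × E`. -/
noncomputable def omegaM (Ld : E × E → ℝ) (fm : E × E → (E →L[ℝ] ℝ)) (x : E × E)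
    (U V : E × E) : ℝ := -extd (thetaM Ld fm) x U V

/-- The forced discrete Legendre transform `FL⁺`. -/
noncomputable def FLp (Ld : E × E → ℝ) (fp : E × E → (E →L[ℝ] ℝ)) (x : E × E) :
    E × (E →L[ℝ] ℝ) := (x.2, D2 Ld x + fp x)

/-- The forced discrete Legendre transform `FL⁻`. -/
noncomputable def FLm (Ld : E × E → ℝ) (fm : E × E → (E →L[ℝ] ℝ)) (x : E × E) :
    E × (E →L[ℝ] ℝ) := (x.1, -D1 Ld x - fm x)

/-!
Writing `-d f_d` in terms of the full derivatives of `f⁻` and `f⁺` and testing the Routh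
identity on pairs of vectors tangent to a single factor isolates each claim: on a pair
`(u₀, 0), (0, u₁)` the right-hand side vanishes, giving the symmetry of the mixed partials,
while on pairs tangent to the first (second) factor only `β q₀` (`β q₁`) survives.
-/

section PartialDerivatives

variable {𝕜 : Type*} [NontriviallyNormedField 𝕜]
  {F G H : Type*} [NormedAddCommGroup F] [NormedSpace 𝕜 F] [NormedAddCommGroup G]
  [NormedSpace 𝕜 G] [NormedAddCommGroup H] [NormedSpace 𝕜 H]

theorem fderiv_comp_prodMk_left_apply {f : F × G → H} {x : F} {y : G}
    (hf : DifferentiableAt 𝕜 f (x, y)) (u : F) :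
    fderiv 𝕜 (fun a => f (a, y)) x u = fderiv 𝕜 f (x, y) (u, 0) := by
  have h : HasFDerivAt (fun a => f (a, y)) ((fderiv 𝕜 f (x, y)).comp (inl 𝕜 F G)) x :=
    hf.hasFDerivAt.comp x (hasFDerivAt_prodMk_left x y)
  rw [h.fderiv]
  rfl

theorem fderiv_comp_prodMk_right_apply {f : F × G → H} {x : F} {y : G}
    (hf : DifferentiableAt 𝕜 f (x, y)) (v : G) :
    fderiv 𝕜 (fun b => f (x, b)) y v = fderiv 𝕜 f (x, y) (0, v) := by
  have h : HasFDerivAt (fun b => f (x, b)) ((fderiv 𝕜 f (x, y)).comp (inr 𝕜 F G)) y :=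
    hf.hasFDerivAt.comp y (hasFDerivAt_prodMk_right x y)
  rw [h.fderiv]
  rfl

end PartialDerivatives

section ForceForm

variable {F : Type*} [NormedAddCommGroup F] [NormedSpace ℝ F]
  {fm fp : F × F → (F →L[ℝ] ℝ)} {p : F × F}

theorem fderiv_fd_apply (hfm : DifferentiableAt ℝ fm p) (hfp : DifferentiableAt ℝ fp p)
    (U V : F × F) :
    fderiv ℝ (fd fm fp) p U V = fderiv ℝ fm p U V.1 + fderiv ℝ fp p U V.2 := by
  have h : HasFDerivAt (fd fm fp) _ p :=
    (hfm.hasFDerivAt.clm_comp (hasFDerivAt_const (fst ℝ F F) p)).add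
      (hfp.hasFDerivAt.clm_comp (hasFDerivAt_const (snd ℝ F F) p))
  simp [h.fderiv]

theorem extd_fd_apply (hfm : DifferentiableAt ℝ fm p) (hfp : DifferentiableAt ℝ fp p)
    (U V : F × F) :
    extd (fd fm fp) p U V
      = fderiv ℝ fm p U V.1 + fderiv ℝ fp p U V.2 - fderiv ℝ fm p V U.1 - fderiv ℝ fp p V U.2 := by
  rw [extd, fderiv_fd_apply hfm hfp, fderiv_fd_apply hfm hfp]
  ring

end ForceForm

theorem routh_force_properties_general
    (fm fp : E × E → (E →L[ℝ] ℝ))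
    (hfm : ContDiff ℝ 1 fm) (hfp : ContDiff ℝ 1 fp)
    (β : E → (E →L[ℝ] E →L[ℝ] ℝ))
    (hRouth : ∀ (q0 q1 u0 u1 v0 v1 : E),
      -extd (fd fm fp) (q0, q1) (u0, u1) (v0, v1) = β q1 u1 v1 - β q0 u0 v0) :
    -- (1) mixed partial derivatives of the force components agree
    (∀ (q0 q1 u0 u1 : E),
        fderiv ℝ (fun a : E => fp (a, q1)) q0 u0 u1
          = fderiv ℝ (fun b : E => fm (q0, b)) q1 u1 u0)
    -- (2) the Routh potential is determined by the force
    ∧ (∀ (q u v : E) (q1 : E),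
        β q u v = fderiv ℝ (fun a : E => fm (a, q1)) q u v
          - fderiv ℝ (fun a : E => fm (a, q1)) q v u)
    ∧ (∀ (q u v : E) (q0 : E),
        β q u v = -(fderiv ℝ (fun b : E => fp (q0, b)) q u v)
          + fderiv ℝ (fun b : E => fp (q0, b)) q v u) := by
  have hdm : Differentiable ℝ fm := hfm.differentiable one_ne_zero
  have hdp : Differentiable ℝ fp := hfp.differentiable one_ne_zero
  have hRouth_fderiv : ∀ q0 q1 u0 u1 v0 v1 : E,
      fderiv ℝ fm (q0, q1) (v0, v1) u0 + fderiv ℝ fp (q0, q1) (v0, v1) u1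
        - fderiv ℝ fm (q0, q1) (u0, u1) v0 - fderiv ℝ fp (q0, q1) (u0, u1) v1
        = β q1 u1 v1 - β q0 u0 v0 := by
    intro q0 q1 u0 u1 v0 v1
    rw [← hRouth, extd_fd_apply (hdm _) (hdp _)]
    ring
  refine ⟨fun q0 q1 u0 u1 => ?_, fun q u v q1 => ?_, fun q u v q0 => ?_⟩
  · have h := hRouth_fderiv q0 q1 u0 0 0 u1
    simp only [map_zero, zero_apply] at h
    rw [fderiv_comp_prodMk_left_apply (hdp _), fderiv_comp_prodMk_right_apply (hdm _)]
    linarith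
  · have h := hRouth_fderiv q q1 u 0 v 0
    simp only [map_zero] at h
    rw [fderiv_comp_prodMk_left_apply (hdm _), fderiv_comp_prodMk_left_apply (hdm _)]
    linarith
  · have h := hRouth_fderiv q0 q 0 u 0 v
    simp only [map_zero] at h
    rw [fderiv_comp_prodMk_right_apply (hdp _), fderiv_comp_prodMk_right_apply (hdp _)]
    linarith

/-- **Properties of a Routh force and determination of its Routh potential.** -/
theorem routh_force_properties
    (fm fp : E × E → (E →L[ℝ] ℝ))
    (hfm : ContDiff ℝ 1 fm) (hfp : ContDiff ℝ 1 fp)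
    (β : E → (E →L[ℝ] E →L[ℝ] ℝ))
    (hβalt : ∀ (q : E) (u v : E), β q u v = -β q v u)
    (hRouth : ∀ (q0 q1 u0 u1 v0 v1 : E),
      -extd (fd fm fp) (q0, q1) (u0, u1) (v0, v1) = β q1 u1 v1 - β q0 u0 v0) :
    -- (1) mixed partial derivatives of the force components agree
    (∀ (q0 q1 u0 u1 : E),
        fderiv ℝ (fun a : E => fp (a, q1)) q0 u0 u1
          = fderiv ℝ (fun b : E => fm (q0, b)) q1 u1 u0)
    -- (2) the Routh potential is determined by the force
    ∧ (∀ (q u v : E) (q1 : E),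
        β q u v = fderiv ℝ (fun a : E => fm (a, q1)) q u v
          - fderiv ℝ (fun a : E => fm (a, q1)) q v u)
    ∧ (∀ (q u v : E) (q0 : E),
        β q u v = -(fderiv ℝ (fun b : E => fp (q0, b)) q u v)
          + fderiv ℝ (fun b : E => fp (q0, b)) q v u) :=
  routh_force_properties_general fm fp hfm hfp β hRouth
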